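/- In a minimal weakly mixing system (X,T), for every point x ∈ X the set of points proximal to x is dense (indeed contains a dense G_δ set). -/

import Mathlib

/-- The group of self-homeomorphisms under composition, so that `T ^ n` (`n : ℤ`)
denotes the `n`-th iterate of `T`. -/
instance Homeomorph.instGroupOld {X : Type*} [TopologicalSpace X] : Group (X ≃ₜ X) where
  mul f g := g.trans f
  one := Homeomorph.refl X
  inv := Homeomorph.symm
  mul_assoc _ _ _ := Homeomorph.ext fun _ => rfl
  one_mul _ := Homeomorph.ext fun _ => rfl
  mul_one _ := Homeomorph.ext fun _ => rfl
  inv_mul_cancel f := Homeomorph.ext fun x => f.symm_apply_apply x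

/-- The orbit closure of a point under a homeomorphism. -/
def orbitCl {X : Type*} [TopologicalSpace X] (T : X ≃ₜ X) (p : X) : Set X :=
  closure {q | ∃ n : ℤ, (T ^ n) p = q}

/-- A (minimal) dynamical system: every orbit closure is everything. -/
def IsMinimalSys {X : Type*} [TopologicalSpace X] (T : X ≃ₜ X) : Prop :=
  ∀ x : X, orbitCl T x = Set.univ

/-- Totally minimal: every nonzero power is minimal. -/
def IsTotallyMinimal {X : Type*} [TopologicalSpace X] (T : X ≃ₜ X) : Prop :=
  ∀ n : ℤ, n ≠ 0 → IsMinimalSys (T ^ n)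

/-- The graph Γ_n = {(T^n x, x) : x ∈ X}. -/
def graphPow {X : Type*} [TopologicalSpace X] (T : X ≃ₜ X) (n : ℤ) : Set (X × X) :=
  {p | ∃ x : X, p = ((T ^ n) x, x)}

/-- POD: totally minimal and for distinct u, v some graph Γ_n (n ≠ 0) lies in the
orbit closure of (u, v) under T × T. -/
def IsPOD {X : Type*} [TopologicalSpace X] (T : X ≃ₜ X) : Prop :=
  IsMinimalSys T ∧ IsTotallyMinimal T ∧
    ∀ u v : X, u ≠ v → ∃ n : ℤ, n ≠ 0 ∧
      graphPow T n ⊆ orbitCl (T.prodCongr T) (u, v)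

/-- Doubly minimal: minimal, and every orbit closure of T × T is either everything
or a graph Γ_m. -/
def IsDoublyMinimal {X : Type*} [TopologicalSpace X] (T : X ≃ₜ X) : Prop :=
  IsMinimalSys T ∧
    ∀ p : X × X, orbitCl (T.prodCongr T) p = Set.univ ∨
      ∃ m : ℤ, orbitCl (T.prodCongr T) p = graphPow T m

/-- A factor map: continuous equivariant surjection. -/
def IsFactorMap {X Y : Type*} [TopologicalSpace X] [TopologicalSpace Y]
    (T : X ≃ₜ X) (S : Y ≃ₜ Y) (π : X → Y) : Prop :=
  Continuous π ∧ Function.Surjective π ∧ ∀ x, π (T x) = S (π x)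

/-- Disjointness: the only closed invariant subset of the product projecting
onto both coordinates is the whole product. -/
def SysDisjoint {X Y : Type*} [TopologicalSpace X] [TopologicalSpace Y]
    (T : X ≃ₜ X) (S : Y ≃ₜ Y) : Prop :=
  ∀ M : Set (X × Y), IsClosed M → (T.prodCongr S) '' M = M →
    Prod.fst '' M = Set.univ → Prod.snd '' M = Set.univ → M = Set.univ

/-- A recurrent point: in the closure of its forward orbit with positive times. -/
def IsRecurrentPt {X : Type*} [TopologicalSpace X] (T : X ≃ₜ X) (x : X) : Prop :=
  x ∈ closure {q | ∃ n : ℕ, 1 ≤ n ∧ (T ^ n) x = q}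

/-- A proximal pair: the orbits come arbitrarily close together. -/
def IsProximal {X : Type*} [PseudoMetricSpace X] (T : X ≃ₜ X) (x x' : X) : Prop :=
  ∀ ε > 0, ∃ n : ℤ, dist ((T ^ n) x) ((T ^ n) x') < ε

/-- A distal point: proximal only to itself. -/
def IsDistalPt {X : Type*} [PseudoMetricSpace X] (T : X ≃ₜ X) (x : X) : Prop :=
  ∀ x', IsProximal T x x' → x' = x

/-- A minimal subset: nonempty, closed, invariant, with all orbits dense in it. -/
def IsMinimalSubset {X : Type*} [TopologicalSpace X] (T : X ≃ₜ X) (M : Set X) : Prop :=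
  M.Nonempty ∧ IsClosed M ∧ (T : X ≃ₜ X) '' M = M ∧
    ∀ p ∈ M, M ⊆ closure {q | ∃ n : ℤ, (T ^ n) p = q}

/-- Topological transitivity. -/
def IsTopTransitive {X : Type*} [TopologicalSpace X] (T : X ≃ₜ X) : Prop :=
  ∀ U V : Set X, IsOpen U → IsOpen V → U.Nonempty → V.Nonempty →
    ∃ n : ℤ, ((T ^ n) '' U ∩ V).Nonempty

/-- Weak mixing: the product system is topologically transitive. -/
def IsWeaklyMixing {X : Type*} [TopologicalSpace X] (T : X ≃ₜ X) : Prop :=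
  IsTopTransitive (T.prodCongr T)


/-!
Fix `x` and `ε > 0`. Cover `X` by finitely many `ε/2`-balls `B₁, …, Bₖ`. Weak mixing makes
the sets of hitting times `N(U, V) = {n | Tⁿ U ∩ V ≠ ∅}` of nonempty open sets a filter base
(Furstenberg's intersection lemma), so for any nonempty open `U` there is a single time `n` with
`Tⁿ U` meeting every `Bᵢ`, in particular the ball containing `Tⁿ x`. Hence the open set of points
whose orbit comes `ε`-close to that of `x` is dense, and the proximal cell of `x`, the intersection
of these sets over `ε = 1/(k+1)`, is a dense `G_δ` by Baire's theorem.
-/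

namespace Homeomorph

variable {X : Type*} [TopologicalSpace X]

theorem zpow_apply_zpow_comm (T : X ≃ₜ X) (m n : ℤ) (x : X) :
    (T ^ m) ((T ^ n) x) = (T ^ n) ((T ^ m) x) :=
  show (T ^ m * T ^ n) x = (T ^ n * T ^ m) x by rw [← zpow_add, ← zpow_add, add_comm]

theorem prodCongr_zpow_apply (T : X ≃ₜ X) (n : ℤ) (p : X × X) :
    (T.prodCongr T ^ n) p = ((T ^ n) p.1, (T ^ n) p.2) := by
  let diag : (X ≃ₜ X) →* (X × X ≃ₜ X × X) :=
    MonoidHom.mk' (fun f => f.prodCongr f) fun _ _ => rfl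
  exact congrArg (· p) (map_zpow diag T n).symm

end Homeomorph

section HittingTimes

variable {X : Type*} [TopologicalSpace X]

def hittingTimes (T : X ≃ₜ X) (U V : Set X) : Set ℤ :=
  {n | ∃ u ∈ U, (T ^ n) u ∈ V}

namespace IsWeaklyMixing

variable {T : X ≃ₜ X}

theorem hittingTimes_nonempty (hwm : IsWeaklyMixing T) {U V : Set X} (hU : IsOpen U)
    (hV : IsOpen V) (hU' : U.Nonempty) (hV' : V.Nonempty) : (hittingTimes T U V).Nonempty := by
  obtain ⟨n, _, ⟨p, hp, rfl⟩, hpV⟩ :=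
    hwm _ _ (hU.prod hU) (hV.prod hV) (hU'.prod hU') (hV'.prod hV')
  rw [Homeomorph.prodCongr_zpow_apply] at hpV
  exact ⟨n, p.1, hp.1, hpV.1⟩

/-- Furstenberg's intersection lemma. -/
theorem exists_hittingTimes_subset_inter (hwm : IsWeaklyMixing T) {U₁ V₁ U₂ V₂ : Set X}
    (hU₁ : IsOpen U₁) (hV₁ : IsOpen V₁) (hU₂ : IsOpen U₂) (hV₂ : IsOpen V₂)
    (hU₁' : U₁.Nonempty) (hV₁' : V₁.Nonempty) (hU₂' : U₂.Nonempty) (hV₂' : V₂.Nonempty) :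
    ∃ U V : Set X, IsOpen U ∧ IsOpen V ∧ U.Nonempty ∧ V.Nonempty ∧
      hittingTimes T U V ⊆ hittingTimes T U₁ V₁ ∩ hittingTimes T U₂ V₂ := by
  obtain ⟨m, _, ⟨p, ⟨hpU₁, hpV₁⟩, rfl⟩, hpUV₂⟩ :=
    hwm _ _ (hU₁.prod hV₁) (hU₂.prod hV₂) (hU₁'.prod hV₁') (hU₂'.prod hV₂')
  rw [Homeomorph.prodCongr_zpow_apply] at hpUV₂
  refine ⟨U₁ ∩ (T ^ m) ⁻¹' U₂, V₁ ∩ (T ^ m) ⁻¹' V₂,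
    hU₁.inter (hU₂.preimage (T ^ m).continuous), hV₁.inter (hV₂.preimage (T ^ m).continuous),
    ⟨p.1, hpU₁, hpUV₂.1⟩, ⟨p.2, hpV₁, hpUV₂.2⟩, ?_⟩
  rintro n ⟨u, ⟨huU₁, huU₂⟩, hnuV₁, hnuV₂⟩
  refine ⟨⟨u, huU₁, hnuV₁⟩, (T ^ m) u, huU₂, ?_⟩
  rwa [Homeomorph.zpow_apply_zpow_comm]

theorem exists_hittingTimes_subset_biInter (hwm : IsWeaklyMixing T) {ι : Type*} {s : Set ι}
    (hs : s.Finite) {U : Set X} {V : ι → Set X} (hU : IsOpen U) (hV : ∀ i, IsOpen (V i))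
    (hU' : U.Nonempty) (hV' : ∀ i, (V i).Nonempty) :
    ∃ U' V' : Set X, IsOpen U' ∧ IsOpen V' ∧ U'.Nonempty ∧ V'.Nonempty ∧
      hittingTimes T U' V' ⊆ ⋂ i ∈ s, hittingTimes T U (V i) := by
  induction s, hs using Set.Finite.induction_on with
  | empty => exact ⟨U, U, hU, hU, hU', hU', by simp⟩
  | @insert i s _ _ ih =>
    obtain ⟨U₁, V₁, hU₁, hV₁, hU₁', hV₁', hsub⟩ := ih
    obtain ⟨U₂, V₂, hU₂, hV₂, hU₂', hV₂', hsub₂⟩ :=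
      hwm.exists_hittingTimes_subset_inter hU₁ hV₁ hU (hV i) hU₁' hV₁' hU' (hV' i)
    refine ⟨U₂, V₂, hU₂, hV₂, hU₂', hV₂', fun n hn => ?_⟩
    rw [Set.biInter_insert]
    exact ⟨(hsub₂ hn).2, hsub (hsub₂ hn).1⟩

end IsWeaklyMixing

end HittingTimes

section Proximal

variable {X : Type*} [PseudoMetricSpace X]

def epsProximalSet (T : X ≃ₜ X) (x : X) (ε : ℝ) : Set X :=
  {x' | ∃ n : ℤ, dist ((T ^ n) x) ((T ^ n) x') < ε}

theorem isOpen_epsProximalSet (T : X ≃ₜ X) (x : X) (ε : ℝ) : IsOpen (epsProximalSet T x ε) := by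
  have : epsProximalSet T x ε = ⋃ n : ℤ, (T ^ n) ⁻¹' Metric.ball ((T ^ n) x) ε := by
    ext x'
    simp [epsProximalSet, dist_comm]
  rw [this]
  exact isOpen_iUnion fun n => Metric.isOpen_ball.preimage (T ^ n).continuous

theorem setOf_isProximal_eq_iInter (T : X ≃ₜ X) (x : X) :
    {x' | IsProximal T x x'} = ⋂ k : ℕ, epsProximalSet T x (1 / (k + 1)) := by
  ext x'
  simp only [Set.mem_ofPred_eq, Set.mem_iInter]
  refine ⟨fun h k => h _ Nat.one_div_pos_of_nat, fun h ε hε => ?_⟩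
  obtain ⟨k, hk⟩ := exists_nat_one_div_lt hε
  obtain ⟨n, hn⟩ := h k
  exact ⟨n, hn.trans hk⟩

theorem isGδ_setOf_isProximal (T : X ≃ₜ X) (x : X) : IsGδ {x' | IsProximal T x x'} := by
  rw [setOf_isProximal_eq_iInter]
  exact .iInter_of_isOpen fun k => isOpen_epsProximalSet T x _

variable [CompactSpace X] {T : X ≃ₜ X}

theorem IsWeaklyMixing.dense_epsProximalSet (hwm : IsWeaklyMixing T) (x : X) {ε : ℝ}
    (hε : 0 < ε) : Dense (epsProximalSet T x ε) := by
  rw [dense_iff_inter_open]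
  intro U hU hU'
  have hε2 : 0 < ε / 2 := half_pos hε
  obtain ⟨t, -, ht, hcover⟩ := finite_cover_balls_of_compact (isCompact_univ (X := X)) hε2
  obtain ⟨W₁, W₂, hW₁, hW₂, hW₁', hW₂', hsub⟩ :=
    hwm.exists_hittingTimes_subset_biInter ht hU (fun z => Metric.isOpen_ball) hU'
      (fun z => ⟨z, Metric.mem_ball_self hε2⟩)
  obtain ⟨n, hn⟩ := hwm.hittingTimes_nonempty hW₁ hW₂ hW₁' hW₂'
  obtain ⟨z, hzt, hxz⟩ := Set.mem_iUnion₂.mp (hcover (Set.mem_univ ((T ^ n) x)))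
  obtain ⟨u, huU, huz⟩ := Set.mem_iInter₂.mp (hsub hn) z hzt
  refine ⟨u, huU, n, ?_⟩
  calc dist ((T ^ n) x) ((T ^ n) u) ≤ dist ((T ^ n) x) z + dist ((T ^ n) u) z :=
        dist_triangle_right _ _ _
    _ < ε / 2 + ε / 2 := add_lt_add hxz huz
    _ = ε := add_halves ε

theorem IsWeaklyMixing.dense_setOf_isProximal (hwm : IsWeaklyMixing T) (x : X) :
    Dense {x' | IsProximal T x x'} := by
  rw [setOf_isProximal_eq_iInter]
  exact dense_iInter_of_isOpen (fun k => isOpen_epsProximalSet T x _)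
    fun k => hwm.dense_epsProximalSet x Nat.one_div_pos_of_nat

end Proximal

theorem proximal_cell_dense_general {X : Type*} [MetricSpace X] [CompactSpace X]
    (T : X ≃ₜ X) (hwm : IsWeaklyMixing T) (x : X) :
    Dense {x' : X | IsProximal T x x'} ∧
      ∃ G : Set X, G ⊆ {x' : X | IsProximal T x x'} ∧ IsGδ G ∧ Dense G :=
  ⟨hwm.dense_setOf_isProximal x, _, subset_rfl, isGδ_setOf_isProximal T x,
    hwm.dense_setOf_isProximal x⟩

theorem proximal_cell_dense {X : Type*} [MetricSpace X] [CompactSpace X]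
    (T : X ≃ₜ X) (hmin : IsMinimalSys T) (hwm : IsWeaklyMixing T) (x : X) :
    Dense {x' : X | IsProximal T x x'} ∧
      ∃ G : Set X, G ⊆ {x' : X | IsProximal T x x'} ∧ IsGδ G ∧ Dense G :=
  proximal_cell_dense_general T hwm x
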